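/- arXiv:2012.15604 — 5 statements merged into one kernel-verified Lean document; each statement's English description precedes it below -/
import Mathlib

section
/- For every function Φ of bounded variation on [a,b] that is continuous and non-constant (e.g. Φ(t) = t), and every piecewise constant (step) function Ψ on [a,b], the total variation of Φ − Ψ on [a,b] is at least the total variation of Φ on [a,b]; in particular for Φ(t)=t it is at least b−a. -/
/-!
On each open piece of the partition `Ψ` is constant, so there `Φ - Ψ` has the same variation as
`Φ`; by continuity of `Φ` its variation over an open piece equals that over the closed piece, and
variation is additive over the pieces. For `Φ = id` the variation is at least `|Φ b - Φ a| = b - a`.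
-/

open Set

namespace eVariationOn

variable {α E : Type*} [LinearOrder α]

theorem sub_const [SeminormedAddCommGroup E] (f : α → E) (k : E) (s : Set α) :
    eVariationOn (fun x => f x - k) s = eVariationOn f s := by
  simp only [eVariationOn, edist_sub_right]

theorem Icc_eq_sum_Icc_fin [PseudoEMetricSpace E] (f : α → E) {n : ℕ} (t : Fin (n + 1) → α)
    (ht : Monotone t) :
    eVariationOn f (Icc (t 0) (t (Fin.last n))) =
      ∑ i : Fin n, eVariationOn f (Icc (t i.castSucc) (t i.succ)) := by
  induction n with
  | zero => simp
  | succ n ih =>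
    have ih' := ih (t ∘ Fin.castSucc) (ht.comp Fin.strictMono_castSucc.monotone)
    simp only [Function.comp_apply, Fin.castSucc_zero] at ih'
    rw [Fin.sum_univ_castSucc]
    simp only [Fin.succ_castSucc, ← ih']
    simpa only [univ_inter, Fin.succ_last] using (Icc_add_Icc f (s := univ) (ht (Fin.zero_le _))
      (ht (Fin.castSucc_le_succ (Fin.last n))) (mem_univ _)).symm

variable [TopologicalSpace α] [OrderTopology α] [DenselyOrdered α]

theorem Ioo_eq_Icc_of_continuousOn [PseudoEMetricSpace E] {f : α → E} {a b : α} (hf : ContinuousOn f (Icc a b)) :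
    eVariationOn f (Ioo a b) = eVariationOn f (Icc a b) := by
  rcases le_or_gt b a with hba | hab
  · simp [hba]
  have hb : ContinuousWithinAt f (Ioi a ∩ Iic b) b :=
    (hf b (right_mem_Icc.2 hab.le)).mono fun x hx => ⟨le_of_lt hx.1, hx.2⟩
  have ha : ContinuousWithinAt f (Ici a) a :=
    (hf a (left_mem_Icc.2 hab.le)).mono_of_mem_nhdsWithin (Icc_mem_nhdsGE hab)
  have hne : (nhdsWithin b (Ioi a ∩ Iio b)).NeBot := by
    rw [Ioi_inter_Iio]; exact right_nhdsWithin_Ioo_neBot hab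
  calc eVariationOn f (Ioo a b) = eVariationOn f (Ioc a b) := by
        simpa only [Ioi_inter_Iio, Ioi_inter_Iic] using
          eVariationOn_inter_Iio_eq_inter_Iic_of_continuousWithinAt hne hb
    _ = eVariationOn f (Icc a b) := eVariationOn_Ioc_eq_Icc_of_continuousWithinAt ha


theorem Icc_le_sub_of_const_on_Ioo [SeminormedAddCommGroup E] {f g : α → E} {a b : α} {k : E}
    (hf : ContinuousOn f (Icc a b)) (hg : ∀ x ∈ Ioo a b, g x = k) :
    eVariationOn f (Icc a b) ≤ eVariationOn (fun x => f x - g x) (Icc a b) :=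
  calc eVariationOn f (Icc a b) = eVariationOn f (Ioo a b) := (Ioo_eq_Icc_of_continuousOn hf).symm
    _ = eVariationOn (fun x => f x - k) (Ioo a b) := (sub_const f k _).symm
    _ = eVariationOn (fun x => f x - g x) (Ioo a b) :=
        eq_of_eqOn fun x hx => by simp only [hg x hx]
    _ ≤ eVariationOn (fun x => f x - g x) (Icc a b) := mono _ Ioo_subset_Icc_self

theorem Icc_le_sub_of_piecewiseConst [SeminormedAddCommGroup E] {f g : α → E} {n : ℕ}
    {t : Fin (n + 1) → α} (ht : Monotone t) (hf : ContinuousOn f (Icc (t 0) (t (Fin.last n))))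
    (hg : ∀ i : Fin n, ∃ k, ∀ x ∈ Ioo (t i.castSucc) (t i.succ), g x = k) :
    eVariationOn f (Icc (t 0) (t (Fin.last n))) ≤
      eVariationOn (fun x => f x - g x) (Icc (t 0) (t (Fin.last n))) := by
  rw [Icc_eq_sum_Icc_fin f t ht, Icc_eq_sum_Icc_fin _ t ht]
  gcongr with i
  obtain ⟨k, hk⟩ := hg i
  exact Icc_le_sub_of_const_on_Ioo (hf.mono (Icc_subset_Icc (ht (Fin.zero_le _))
    (ht (Fin.le_last _)))) hk

end eVariationOn

theorem ofReal_sub_le_eVariationOn_of_eq_self {f : ℝ → ℝ} {a b : ℝ}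
    (hf : ∀ x ∈ Icc a b, f x = x) : ENNReal.ofReal (b - a) ≤ eVariationOn f (Icc a b) := by
  rcases le_or_gt a b with hab | hba
  · have := eVariationOn.edist_le f (left_mem_Icc.2 hab) (right_mem_Icc.2 hab)
    rw [hf a (left_mem_Icc.2 hab), hf b (right_mem_Icc.2 hab), edist_dist, Real.dist_eq,
      abs_sub_comm] at this
    exact (ENNReal.ofReal_le_ofReal (le_abs_self _)).trans this
  · simp [ENNReal.ofReal_of_nonpos (sub_nonpos.2 hba.le)]

theorem variation_sub_step_ge_general
    (a b : ℝ) (Φ Ψ : ℝ → ℝ)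
    (hΦcont : ContinuousOn Φ (Set.Icc a b))
    (hΨstep : ∃ (n : ℕ) (t : Fin (n + 1) → ℝ), Monotone t ∧ t 0 = a ∧ t (Fin.last n) = b ∧
      ∀ i : Fin n, ∃ c : ℝ, ∀ s ∈ Set.Ioo (t i.castSucc) (t i.succ), Ψ s = c) :
    eVariationOn Φ (Set.Icc a b) ≤ eVariationOn (fun s => Φ s - Ψ s) (Set.Icc a b) ∧
      ((∀ s ∈ Set.Icc a b, Φ s = s) →
        ENNReal.ofReal (b - a) ≤ eVariationOn (fun s => Φ s - Ψ s) (Set.Icc a b)) := by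
  obtain ⟨n, t, ht, rfl, rfl, hΨ⟩ := hΨstep
  have key := eVariationOn.Icc_le_sub_of_piecewiseConst ht hΦcont hΨ
  exact ⟨key, fun hid => (ofReal_sub_le_eVariationOn_of_eq_self hid).trans key⟩

/-- For a continuous non-constant function `Φ` of bounded variation on `[a,b]` and any
step (piecewise constant) function `Ψ` on `[a,b]`, the total variation of `Φ − Ψ` is at
least that of `Φ`; in particular for `Φ(t) = t` it is at least `b − a`. -/
theorem variation_sub_step_ge
    (a b : ℝ) (hab : a < b) (Φ Ψ : ℝ → ℝ)
    (hΦbv : BoundedVariationOn Φ (Set.Icc a b))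
    (hΦcont : ContinuousOn Φ (Set.Icc a b))
    (hΦnonconst : ¬ ∀ s ∈ Set.Icc a b, ∀ t ∈ Set.Icc a b, Φ s = Φ t)
    (hΨstep : ∃ (n : ℕ) (t : Fin (n + 1) → ℝ), Monotone t ∧ t 0 = a ∧ t (Fin.last n) = b ∧
      ∀ i : Fin n, ∃ c : ℝ, ∀ s ∈ Set.Ioo (t i.castSucc) (t i.succ), Ψ s = c) :
    eVariationOn Φ (Set.Icc a b) ≤ eVariationOn (fun s => Φ s - Ψ s) (Set.Icc a b) ∧
      ((∀ s ∈ Set.Icc a b, Φ s = s) →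
        ENNReal.ofReal (b - a) ≤ eVariationOn (fun s => Φ s - Ψ s) (Set.Icc a b)) :=
  variation_sub_step_ge_general a b Φ Ψ hΦcont hΨstep
end

section
/- Let ℓ be a continuous linear functional on C([a,b], ℂ). Then there exists a sequence (ℓ_k) of functionals, each of the form ℓ_k(x) = Σ_{j=1}^{p_k} c_{k,j} x(t_{k,j}) with c_{k,j} ∈ ℂ and t_{k,j} ∈ [a,b], such that ℓ_k(x) → ℓ(x) for every x ∈ C([a,b], ℂ). -/
/-!
On a compact metric space, take for each `k` a finite partition of unity `ρ_{k,j}` subordinate to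
balls of radius `1 / (k + 1)` centred at points `t_{k,j}`. By uniform continuity, the interpolants
`Σ_j x(t_{k,j}) ρ_{k,j}` converge uniformly to `x`, so by continuity and linearity of `ℓ`,
`Σ_j ℓ(ρ_{k,j}) x(t_{k,j}) → ℓ(x)`.
-/

open Filter Topology Metric

section

variable {X : Type*} [PseudoMetricSpace X] [CompactSpace X]

variable (X) in
theorem exists_partitionOfUnity_fin_isSubordinate_ball {δ : ℝ} (hδ : 0 < δ) :
    ∃ (n : ℕ) (t : Fin n → X) (ρ : PartitionOfUnity (Fin n) X),
      ρ.IsSubordinate fun j => ball (t j) δ := by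
  obtain ⟨s, hs⟩ :=
    CompactSpace.elim_nhds_subcover (fun x => ball x δ) fun x : X => ball_mem_nhds x hδ
  let t : Fin s.card → X := fun j => s.equivFin.symm j
  have hcover : Set.univ ⊆ ⋃ j, ball (t j) δ := by
    intro x _
    obtain ⟨y, hy, hxy⟩ := Set.mem_iUnion₂.1 (hs.ge trivial)
    exact Set.mem_iUnion.2 ⟨s.equivFin ⟨y, hy⟩, by simpa [t] using hxy⟩
  obtain ⟨ρ, hρ⟩ := PartitionOfUnity.exists_isSubordinate isClosed_univ _ (fun _ => isOpen_ball)
    hcover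
  exact ⟨_, t, ρ, hρ⟩

variable {𝕜 : Type*} [RCLike 𝕜]

theorem PartitionOfUnity.norm_sum_smul_realToRCLike_sub_le {ι : Type*} [Fintype ι]
    (ρ : PartitionOfUnity ι X) (t : ι → X) (f : C(X, 𝕜)) {ε : ℝ} (hε : 0 ≤ ε)
    (hf : ∀ i, ∀ x ∈ tsupport (ρ i), ‖f (t i) - f x‖ ≤ ε) :
    ‖∑ i, f (t i) • (ρ i).realToRCLike 𝕜 - f‖ ≤ ε := by
  refine (ContinuousMap.norm_le _ hε).2 fun x => ?_
  have hsum : ∑ i, ρ i x = 1 := by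
    rw [← finsum_eq_sum_of_fintype]; exact ρ.sum_eq_one (Set.mem_univ x)
  have hterm : ∀ i, ρ i x * ‖f (t i) - f x‖ ≤ ρ i x * ε := by
    intro i
    by_cases hx : ρ i x = 0
    · simp [hx]
    · exact mul_le_mul_of_nonneg_left (hf i x (subset_tsupport _ hx)) (ρ.nonneg i x)
  calc ‖(∑ i, f (t i) • (ρ i).realToRCLike 𝕜 - f) x‖
      = ‖∑ i, ρ i x • (f (t i) - f x)‖ := by
        simp_rw [smul_sub, Finset.sum_sub_distrib, ← Finset.sum_smul, hsum, one_smul]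
        simp [ContinuousMap.sum_apply, RCLike.real_smul_eq_coe_mul, mul_comm]
    _ ≤ ∑ i, ρ i x * ‖f (t i) - f x‖ := by
        refine (norm_sum_le _ _).trans (Finset.sum_le_sum fun i _ => ?_)
        rw [norm_smul, Real.norm_of_nonneg (ρ.nonneg i x)]
    _ ≤ ∑ i, ρ i x * ε := Finset.sum_le_sum fun i _ => hterm i
    _ = ε := by rw [← Finset.sum_mul, hsum, one_mul]

variable (X 𝕜) in
theorem ContinuousMap.exists_tendsto_sum_eval_smul :
    ∃ (p : ℕ → ℕ) (t : (k : ℕ) → Fin (p k) → X) (φ : (k : ℕ) → Fin (p k) → C(X, 𝕜)),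
      ∀ f : C(X, 𝕜), Tendsto (fun k => ∑ j, f (t k j) • φ k j) atTop (𝓝 f) := by
  choose p t ρ hρ using fun k : ℕ =>
    exists_partitionOfUnity_fin_isSubordinate_ball X (Nat.one_div_pos_of_nat (n := k))
  refine ⟨p, t, fun k j => (ρ k j).realToRCLike 𝕜, fun f => Metric.tendsto_atTop.2 fun ε hε => ?_⟩
  obtain ⟨δ, hδ, hfδ⟩ := Metric.uniformContinuous_iff.1
    (CompactSpace.uniformContinuous_of_continuous f.continuous) (ε / 2) (half_pos hε)
  obtain ⟨N, hN⟩ := exists_nat_one_div_lt hδ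
  refine ⟨N, fun k hk => ?_⟩
  have hclose : ∀ j, ∀ x ∈ tsupport (ρ k j), ‖f (t k j) - f x‖ ≤ ε / 2 := by
    intro j x hx
    have hxk : dist x (t k j) < 1 / (k + 1) := hρ k j hx
    have hkN : (1 : ℝ) / (k + 1) ≤ 1 / (N + 1) := by gcongr
    rw [← dist_eq_norm, dist_comm]
    exact (hfδ (hxk.trans_le hkN |>.trans hN)).le
  rw [dist_eq_norm]
  exact ((ρ k).norm_sum_smul_realToRCLike_sub_le (t k) f (half_pos hε).le hclose).trans_lt
    (half_lt_self hε)

theorem ContinuousLinearMap.exists_tendsto_sum_eval_smul {F : Type*} [AddCommMonoid F]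
    [Module 𝕜 F] [TopologicalSpace F] (ℓ : C(X, 𝕜) →L[𝕜] F) :
    ∃ (p : ℕ → ℕ) (c : (k : ℕ) → Fin (p k) → F) (t : (k : ℕ) → Fin (p k) → X),
      ∀ f : C(X, 𝕜), Tendsto (fun k => ∑ j, f (t k j) • c k j) atTop (𝓝 (ℓ f)) := by
  obtain ⟨p, t, φ, hφ⟩ := ContinuousMap.exists_tendsto_sum_eval_smul X 𝕜
  refine ⟨p, fun k j => ℓ (φ k j), t, fun f => ?_⟩
  simpa only [Function.comp_def, map_sum, map_smul] using (ℓ.continuous.tendsto f).comp (hφ f)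

end

theorem multipoint_functionals_weakstar_dense_general
    (a b : ℝ)
    (ℓ : C(Set.Icc a b, ℂ) →L[ℂ] ℂ) :
    ∃ (p : ℕ → ℕ) (c : (k : ℕ) → Fin (p k) → ℂ) (t : (k : ℕ) → Fin (p k) → Set.Icc a b),
      ∀ x : C(Set.Icc a b, ℂ),
        Tendsto (fun k => ∑ j : Fin (p k), c k j * x (t k j)) atTop (nhds (ℓ x)) := by
  obtain ⟨p, c, t, h⟩ := ℓ.exists_tendsto_sum_eval_smul
  exact ⟨p, c, t, fun x => by simpa only [smul_eq_mul, mul_comm] using h x⟩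

/-- For every continuous linear functional `ℓ` on `C([a,b], ℂ)` there is a sequence of
functionals of the form `x ↦ Σ_{j=1}^{p_k} c_{k,j} x(t_{k,j})` converging to `ℓ`
pointwise (weak* sequential density of multipoint functionals). -/
theorem multipoint_functionals_weakstar_dense
    (a b : ℝ) (hab : a < b)
    (ℓ : C(Set.Icc a b, ℂ) →L[ℂ] ℂ) :
    ∃ (p : ℕ → ℕ) (c : (k : ℕ) → Fin (p k) → ℂ) (t : (k : ℕ) → Fin (p k) → Set.Icc a b),
      ∀ x : C(Set.Icc a b, ℂ),
        Tendsto (fun k => ∑ j : Fin (p k), c k j * x (t k j)) atTop (nhds (ℓ x)) :=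
  multipoint_functionals_weakstar_dense_general a b ℓ
end

section
/- Let B : C([a,b], ℂ^m) → ℂ^m be a continuous linear operator, A ∈ L¹([a,b], ℂ^{m×m}), and Y the matrizant of y' = −Ay with Y(a) = I. The boundary-value problem x' + A x = f a.e., B x = q has a unique solution x ∈ W¹₁([a,b], ℂ^m) for all f ∈ L¹ and q ∈ ℂ^m if and only if the m×m matrix [BY], whose j-th column is B applied to the j-th column of Y, is invertible. -/
/-!
Every solution of `x' + A x = f` has the form `x₀ + Y c` with `c = x(a)`, where `x₀` is the
solution with `x₀(a) = 0`. Existence and uniqueness for the initial-value problem come from the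
Picard operator: its `n`-th iterate is Lipschitz with constant `(∫ₐᵇ ‖A‖)ⁿ / n!`, so some iterate
is a contraction. The boundary condition `B x = q` thus becomes `B x₀ + [BY] c = q`, which has
exactly one solution `c` for every `q` if and only if `[BY]` is invertible.
-/

open MeasureTheory Matrix

attribute [local instance] Matrix.linftyOpNormedAddCommGroup Matrix.linftyOpNormedRing
  Matrix.linftyOpNormedSpace

/-- `u ∈ W¹₁([a,b], ℂ^m)` solves `u' + A u = f` a.e. on `[a,b]`, expressed in the
equivalent integral form. -/
def SolvesLinearSystem (a b : ℝ) (hab : a ≤ b) (m : ℕ)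
    (A : ℝ → Matrix (Fin m) (Fin m) ℂ) (f : ℝ → Fin m → ℂ)
    (u : C(Set.Icc a b, Fin m → ℂ)) : Prop :=
  ∀ t : Set.Icc a b,
    u t = u ⟨a, Set.left_mem_Icc.mpr hab⟩ +
      ∫ s in a..(t : ℝ), (f s - A s *ᵥ (Set.IccExtend hab u) s)

-- Instance search commits to the product topology on matrices and then finds no
-- `ENormedAddMonoid` compatible with it, so the one of the `L∞`-operator norm is supplied here.
noncomputable abbrev Matrix.linftyOpENormedAddMonoid {ι : Type*} [Fintype ι] :
    ENormedAddMonoid (Matrix ι ι ℂ) :=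
  NormedAddGroup.toENormedAddMonoid

attribute [local instance] Matrix.linftyOpENormedAddMonoid

open Set Function
open scoped Nat

theorem integral_mul_pow_primitive {g : ℝ → ℝ} {a t : ℝ}
    (hg : IntervalIntegrable g volume a t) (k : ℕ) :
    ∫ s in a..t, g s * (∫ r in a..s, g r) ^ k = (∫ r in a..t, g r) ^ (k + 1) / (k + 1) := by
  set Φ : ℝ → ℝ := fun s => ∫ r in a..s, g r
  have hΦ : AbsolutelyContinuousOnInterval Φ a t :=
    hg.absolutelyContinuousOnInterval_intervalIntegral left_mem_uIcc
  have hΦpow : AbsolutelyContinuousOnInterval (fun s => Φ s ^ (k + 1)) a t := by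
    induction k with
    | zero => simpa using hΦ
    | succ k ih => simpa only [pow_succ] using ih.fun_mul hΦ
  have hderiv : ∀ᵐ s, s ∈ uIoc a t →
      deriv (fun s => Φ s ^ (k + 1)) s = (k + 1) * (g s * Φ s ^ k) := by
    filter_upwards [hg.ae_hasDerivAt_integral] with s hs hst
    rw [((hs (uIoc_subset_uIcc hst) a left_mem_uIcc).fun_pow (k + 1)).deriv]
    push_cast; ring
  have hFTC := hΦpow.integral_deriv_eq_sub
  rw [intervalIntegral.integral_congr_ae hderiv, intervalIntegral.integral_const_mul] at hFTC
  simp only [Φ, intervalIntegral.integral_same, zero_pow k.succ_ne_zero, sub_zero] at hFTC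
  rw [eq_div_iff (by positivity), ← hFTC, mul_comm]

theorem MeasureTheory.IntegrableOn.intervalIntegrable_of_mem_Icc {E : Type*}
    [NormedAddCommGroup E] {g : ℝ → E} {a b s t : ℝ} (hg : IntegrableOn g (Icc a b))
    (hs : s ∈ Icc a b) (ht : t ∈ Icc a b) : IntervalIntegrable g volume s t :=
  (hg.mono_set (uIcc_subset_Icc hs ht)).intervalIntegrable

variable {ι : Type*} [Fintype ι]

theorem MeasureTheory.IntegrableOn.mulVec_of_norm_le {α : Type*} [MeasurableSpace α]
    {μ : Measure α} {s : Set α} {A : α → Matrix ι ι ℂ} {v : α → ι → ℂ}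
    (hA : IntegrableOn A s μ) (hv : AEStronglyMeasurable v (μ.restrict s)) {C : ℝ}
    (hC : ∀ x, ‖v x‖ ≤ C) : IntegrableOn (fun x => A x *ᵥ v x) s μ := by
  refine Integrable.mono' (hA.norm.mul_const C) ?_ (ae_of_all _ fun x => ?_)
  · exact (continuous_fst.matrix_mulVec continuous_snd).comp_aestronglyMeasurable
      (hA.aestronglyMeasurable.prodMk hv)
  · exact (linfty_opNorm_mulVec _ _).trans (by gcongr; exact hC x)

theorem intervalIntegral.integral_mulVec {F : ℝ → Matrix ι ι ℂ} {s t : ℝ}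
    (hF : IntervalIntegrable F volume s t) (c : ι → ℂ) :
    (∫ x in s..t, F x) *ᵥ c = ∫ x in s..t, F x *ᵥ c :=
  (((mulVec.addMonoidHomLeft c).toRealLinearMap
    (continuous_id.matrix_mulVec continuous_const)).intervalIntegral_comp_comm hF).symm

section Volterra

variable {a b : ℝ} (hab : a ≤ b)

def IsVolterraSolution (A : ℝ → Matrix ι ι ℂ) (f : ℝ → ι → ℂ) (c : ι → ℂ)
    (u : C(Icc a b, ι → ℂ)) : Prop :=
  ∀ t : Icc a b, u t = c + ∫ s in a..(t : ℝ), (f s - A s *ᵥ IccExtend hab u s)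

variable {A : ℝ → Matrix ι ι ℂ} {f : ℝ → ι → ℂ}

theorem IsVolterraSolution.apply_left {c : ι → ℂ} {u : C(Icc a b, ι → ℂ)}
    (hu : IsVolterraSolution hab A f c u) : u ⟨a, left_mem_Icc.2 hab⟩ = c := by
  simpa using hu ⟨a, left_mem_Icc.2 hab⟩

theorem integrableOn_volterra_integrand (hA : IntegrableOn A (Icc a b))
    (hf : IntegrableOn f (Icc a b)) (u : C(Icc a b, ι → ℂ)) :
    IntegrableOn (fun s => f s - A s *ᵥ IccExtend hab u s) (Icc a b) :=
  hf.sub <| hA.mulVec_of_norm_le u.continuous.Icc_extend'.aestronglyMeasurable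
    fun _ => u.norm_coe_le_norm _

theorem IsVolterraSolution.add (hA : IntegrableOn A (Icc a b)) {g : ℝ → ι → ℂ}
    (hf : IntegrableOn f (Icc a b)) (hg : IntegrableOn g (Icc a b)) {c d : ι → ℂ}
    {u v : C(Icc a b, ι → ℂ)} (hu : IsVolterraSolution hab A f c u)
    (hv : IsVolterraSolution hab A g d v) : IsVolterraSolution hab A (f + g) (c + d) (u + v) := by
  intro t
  have h1 := (integrableOn_volterra_integrand hab hA hf u).intervalIntegrable_of_mem_Icc
      (left_mem_Icc.2 hab) t.2
  have h2 := (integrableOn_volterra_integrand hab hA hg v).intervalIntegrable_of_mem_Icc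
      (left_mem_Icc.2 hab) t.2
  rw [ContinuousMap.add_apply, hu t, hv t, add_add_add_comm,
    ← intervalIntegral.integral_add h1 h2]
  refine congrArg _ (intervalIntegral.integral_congr fun s _ => ?_)
  simp only [Pi.add_apply, IccExtend_apply, ContinuousMap.add_apply, mulVec_add]
  abel

noncomputable def volterraOperator (hA : IntegrableOn A (Icc a b))
    (hf : IntegrableOn f (Icc a b)) (c : ι → ℂ) (u : C(Icc a b, ι → ℂ)) : C(Icc a b, ι → ℂ) where
  toFun t := c + ∫ s in a..(t : ℝ), (f s - A s *ᵥ IccExtend hab u s)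
  continuous_toFun := by
    have := intervalIntegral.continuousOn_primitive_interval' ((integrableOn_volterra_integrand
      hab hA hf u).intervalIntegrable_of_mem_Icc (left_mem_Icc.2 hab) (right_mem_Icc.2 hab))
      left_mem_uIcc
    rw [uIcc_of_le hab] at this
    exact continuous_const.add this.domRestrict

section FixedPoint

variable (hA : IntegrableOn A (Icc a b)) (hf : IntegrableOn f (Icc a b))

theorem isVolterraSolution_iff_isFixedPt (c : ι → ℂ) (u : C(Icc a b, ι → ℂ)) :
    IsVolterraSolution hab A f c u ↔ IsFixedPt (volterraOperator hab hA hf c) u :=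
  ⟨fun h => ContinuousMap.ext fun t => (h t).symm, fun h t => (DFunLike.congr_fun h t).symm⟩

theorem dist_volterraOperator_apply_le (c : ι → ℂ) (u v : C(Icc a b, ι → ℂ)) (t : Icc a b) :
    dist (volterraOperator hab hA hf c u t) (volterraOperator hab hA hf c v t) ≤
      ∫ s in a..(t : ℝ), ‖A s‖ * dist (IccExtend hab u s) (IccExtend hab v s) := by
  have hint := fun w : C(Icc a b, ι → ℂ) =>
    (integrableOn_volterra_integrand hab hA hf w).intervalIntegrable_of_mem_Icc
      (left_mem_Icc.2 hab) t.2
  have hAt : IntervalIntegrable (fun s => ‖A s‖) volume a t :=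
    IntegrableOn.intervalIntegrable_of_mem_Icc hA.norm (left_mem_Icc.2 hab) t.2
  rw [dist_eq_norm]
  simp only [volterraOperator, ContinuousMap.coe_mk, add_sub_add_left_eq_sub,
    ← intervalIntegral.integral_sub (hint u) (hint v)]
  refine intervalIntegral.norm_integral_le_of_norm_le t.2.1 (ae_of_all _ fun s _ => ?_)
    (hAt.mul_continuousOn (u.continuous.Icc_extend'.dist v.continuous.Icc_extend').continuousOn)
  rw [sub_sub_sub_cancel_left, ← mulVec_sub, dist_comm, dist_eq_norm]
  exact linfty_opNorm_mulVec _ _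

theorem dist_volterraOperator_iterate_apply_le (c : ι → ℂ) (n : ℕ) (u v : C(Icc a b, ι → ℂ))
    (t : Icc a b) :
    dist ((volterraOperator hab hA hf c)^[n] u t) ((volterraOperator hab hA hf c)^[n] v t) ≤
      (∫ s in a..(t : ℝ), ‖A s‖) ^ n / n ! * dist u v := by
  induction n generalizing t with
  | zero => simpa using ContinuousMap.dist_apply_le_dist t
  | succ n ih =>
    set T := volterraOperator hab hA hf c
    have hAt : IntervalIntegrable (fun s => ‖A s‖) volume a t :=
      IntegrableOn.intervalIntegrable_of_mem_Icc hA.norm (left_mem_Icc.2 hab) t.2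
    have hΦ : ContinuousOn (fun s => ∫ r in a..s, ‖A r‖) (uIcc a t) :=
      intervalIntegral.continuousOn_primitive_interval' hAt left_mem_uIcc
    have hbound : ∀ s ∈ Icc a (t : ℝ), ‖A s‖ * dist (IccExtend hab (T^[n] u) s)
        (IccExtend hab (T^[n] v) s) ≤ ‖A s‖ * (∫ r in a..s, ‖A r‖) ^ n * (dist u v / n !) := by
      intro s hs
      have hsab : s ∈ Icc a b := ⟨hs.1, hs.2.trans t.2.2⟩
      rw [IccExtend_of_mem hab _ hsab, IccExtend_of_mem hab _ hsab, mul_assoc]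
      grw [ih ⟨s, hsab⟩]
      exact le_of_eq (by ring)
    calc dist (T^[n + 1] u t) (T^[n + 1] v t)
        ≤ ∫ s in a..(t : ℝ), ‖A s‖ * dist (IccExtend hab (T^[n] u) s)
            (IccExtend hab (T^[n] v) s) := by
          rw [iterate_succ_apply', iterate_succ_apply']
          exact dist_volterraOperator_apply_le hab hA hf c _ _ t
      _ ≤ ∫ s in a..(t : ℝ), ‖A s‖ * (∫ r in a..s, ‖A r‖) ^ n * (dist u v / n !) := by
          refine intervalIntegral.integral_mono_on t.2.1 ?_ ?_ hbound
          · exact hAt.mul_continuousOn ((T^[n] u).continuous.Icc_extend'.dist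
              (T^[n] v).continuous.Icc_extend').continuousOn
          · exact (hAt.mul_continuousOn (hΦ.pow n)).mul_const _
      _ = (∫ s in a..(t : ℝ), ‖A s‖) ^ (n + 1) / (n + 1) ! * dist u v := by
          rw [intervalIntegral.integral_mul_const, integral_mul_pow_primitive hAt,
            Nat.factorial_succ]
          push_cast
          field_simp

theorem exists_contractingWith_iterate_volterraOperator (c : ι → ℂ) :
    ∃ n, ContractingWith (1 / 2) (volterraOperator hab hA hf c)^[n] := by
  set Φ := fun t => ∫ s in a..t, ‖A s‖
  obtain ⟨n, hn⟩ := ((FloorSemiring.tendsto_pow_div_factorial_atTop (Φ b)).eventually_lt_const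
    (by norm_num : (0 : ℝ) < 1 / 2)).exists
  refine ⟨n, by norm_num, LipschitzWith.of_dist_le_mul fun u v => ?_⟩
  refine (ContinuousMap.dist_le (by positivity)).2 fun t => ?_
  have hΦt : 0 ≤ Φ t := intervalIntegral.integral_nonneg t.2.1 fun _ _ => norm_nonneg _
  have hΦb : Φ t ≤ Φ b := intervalIntegral.integral_mono_interval le_rfl t.2.1 t.2.2
    (ae_of_all _ fun _ => norm_nonneg _)
    (IntegrableOn.intervalIntegrable_of_mem_Icc hA.norm (left_mem_Icc.2 hab) (right_mem_Icc.2 hab))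
  calc _ ≤ Φ t ^ n / n ! * dist u v :=
        dist_volterraOperator_iterate_apply_le hab hA hf c n u v t
    _ ≤ Φ b ^ n / n ! * dist u v := by gcongr
    _ ≤ _ := by push_cast; gcongr

end FixedPoint

theorem existsUnique_isVolterraSolution (hA : IntegrableOn A (Icc a b))
    (hf : IntegrableOn f (Icc a b)) (c : ι → ℂ) :
    ∃! u, IsVolterraSolution hab A f c u := by
  obtain ⟨n, hn⟩ := exists_contractingWith_iterate_volterraOperator hab hA hf c
  have : Nonempty C(Icc a b, ι → ℂ) := ⟨0⟩
  simp only [isVolterraSolution_iff_isFixedPt hab hA hf]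
  exact ⟨_, hn.isFixedPt_fixedPoint_iterate,
    fun u hu => hn.fixedPoint_unique' (hu.iterate n) hn.fixedPoint_isFixedPt⟩

end Volterra

section Matrizant

variable {a b : ℝ} {A Y : ℝ → Matrix ι ι ℂ}

noncomputable def matrizantMap (hY : ContinuousOn Y (Icc a b)) :
    (ι → ℂ) →ₗ[ℂ] C(Icc a b, ι → ℂ) where
  toFun c := ⟨fun t => Y t *ᵥ c, hY.domRestrict.matrix_mulVec continuous_const⟩
  map_add' c d := by ext1; exact mulVec_add _ c d
  map_smul' z c := by ext1; exact mulVec_smul _ z c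

variable [DecidableEq ι] (hYc : ContinuousOn Y (Icc a b))

theorem isVolterraSolution_matrizantMap (hab : a ≤ b) (hA : IntegrableOn A (Icc a b))
    (hY : ∀ t ∈ Icc a b, Y t = 1 - ∫ s in a..t, A s * Y s) (c : ι → ℂ) :
    IsVolterraSolution hab A 0 c (matrizantMap hYc c) := by
  intro t
  have hAY : IntegrableOn (fun s => A s * Y s) (Icc a b) := hA.mul_continuousOn hYc isCompact_Icc
  change Y t *ᵥ c = _
  rw [hY t t.2, sub_mulVec, one_mulVec, intervalIntegral.integral_mulVec
    (hAY.intervalIntegrable_of_mem_Icc (left_mem_Icc.2 hab) t.2), sub_eq_add_neg,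
    ← intervalIntegral.integral_neg]
  refine congrArg _ (intervalIntegral.integral_congr fun s hs => ?_)
  have hsab : s ∈ Icc a b := uIcc_subset_Icc (left_mem_Icc.2 hab) t.2 hs
  rw [IccExtend_of_mem hab _ hsab, Pi.zero_apply, zero_sub, ← mulVec_mulVec]
  rfl

theorem map_matrizantMap {B : C(Icc a b, ι → ℂ) →L[ℂ] (ι → ℂ)}
    {M : Matrix ι ι ℂ} (hM : ∀ (j : ι) (u : C(Icc a b, ι → ℂ)),
      (∀ t : Icc a b, u t = fun i => Y t i j) → (fun i => M i j) = B u) (c : ι → ℂ) :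
    B (matrizantMap hYc c) = M *ᵥ c := by
  suffices B.toLinearMap ∘ₗ matrizantMap hYc = toLin' M from LinearMap.congr_fun this c
  refine LinearMap.pi_ext' fun j => LinearMap.ext_ring ?_
  simp only [LinearMap.comp_apply, LinearMap.coe_single, toLin'_apply, mulVec_single_one]
  exact (hM j _ fun t => mulVec_single_one _ j).symm

end Matrizant

theorem Matrix.isUnit_iff_forall_existsUnique_add_mulVec_eq {K : Type*} [Field K]
    [DecidableEq ι] (M : Matrix ι ι K) (d : ι → K) : IsUnit M ↔ ∀ q, ∃! c, d + M *ᵥ c = q := by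
  rw [← bijective_iff_existsUnique,
    show (fun c => d + M *ᵥ c) = Equiv.addLeft d ∘ M.mulVec from rfl,
    (Equiv.addLeft d).comp_bijective]
  exact ⟨fun h => ⟨mulVec_injective_iff_isUnit.2 h, mulVec_surjective_iff_isUnit.2 h⟩,
    fun h => mulVec_injective_iff_isUnit.1 h.1⟩

theorem existsUnique_solvesLinearSystem_and_eq_iff {m : ℕ} {a b : ℝ} (hab : a ≤ b)
    {A Y : ℝ → Matrix (Fin m) (Fin m) ℂ} {f : ℝ → Fin m → ℂ} (hA : IntegrableOn A (Icc a b))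
    (hf : IntegrableOn f (Icc a b)) (hY : ∀ t ∈ Icc a b, Y t = 1 - ∫ s in a..t, A s * Y s)
    (hYc : ContinuousOn Y (Icc a b)) {B : C(Icc a b, Fin m → ℂ) →L[ℂ] (Fin m → ℂ)}
    {M : Matrix (Fin m) (Fin m) ℂ} (hM : ∀ (j : Fin m) (u : C(Icc a b, Fin m → ℂ)),
      (∀ t : Icc a b, u t = fun i => Y t i j) → (fun i => M i j) = B u)
    {u₀ : C(Icc a b, Fin m → ℂ)} (hu₀ : IsVolterraSolution hab A f 0 u₀) (q : Fin m → ℂ) :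
    (∃! u, SolvesLinearSystem a b hab m A f u ∧ B u = q) ↔ ∃! c, B u₀ + M *ᵥ c = q := by
  set w := matrizantMap hYc
  have hsol (c : Fin m → ℂ) : IsVolterraSolution hab A f c (u₀ + w c) := by
    simpa using hu₀.add hab hA hf (g := 0) integrableOn_zero
      (isVolterraSolution_matrizantMap hYc hab hA hY c)
  have hsolves (c : Fin m → ℂ) : SolvesLinearSystem a b hab m A f (u₀ + w c) := by
    rw [SolvesLinearSystem, (hsol c).apply_left]
    exact hsol c
  have hparam {u} (hu : SolvesLinearSystem a b hab m A f u) :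
      u = u₀ + w (u ⟨a, left_mem_Icc.2 hab⟩) :=
    (existsUnique_isVolterraSolution hab hA hf _).unique hu (hsol _)
  have hB (c : Fin m → ℂ) : B (u₀ + w c) = B u₀ + M *ᵥ c := by
    rw [map_add, map_matrizantMap hYc hM]
  constructor
  · rintro ⟨u, ⟨hu, rfl⟩, huniq⟩
    refine ⟨_, (hB _).symm.trans (congrArg B (hparam hu)).symm, fun c hc => ?_⟩
    rw [← huniq _ ⟨hsolves c, (hB c).trans hc⟩, (hsol c).apply_left]
  · rintro ⟨c, hc, hcuniq⟩
    refine ⟨u₀ + w c, ⟨hsolves c, (hB c).trans hc⟩, fun u ⟨hu, hq⟩ => ?_⟩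
    rw [hparam hu, hcuniq _ ((hB _).symm.trans ((congrArg B (hparam hu)).symm.trans hq))]

/-- Kiguradze's solvability criterion: the boundary-value problem
`x' + Ax = f` a.e., `Bx = q` is uniquely solvable in `W¹₁([a,b], ℂ^m)` for all
`f ∈ L¹` and `q ∈ ℂ^m` if and only if the matrix `[BY]`, whose `j`-th column is `B`
applied to the `j`-th column of the matrizant `Y` of `y' = −Ay`, is invertible. -/
theorem kiguradze_solvability_criterion
    (a b : ℝ) (hab : a < b) (m : ℕ)
    (A : ℝ → Matrix (Fin m) (Fin m) ℂ) (hA : @IntegrableOn ℝ (Matrix (Fin m) (Fin m) ℂ) _ _ SeminormedAddGroup.toContinuousENorm A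
      (Set.Icc a b) volume)
    (B : C(Set.Icc a b, Fin m → ℂ) →L[ℂ] (Fin m → ℂ))
    (Y : ℝ → Matrix (Fin m) (Fin m) ℂ)
    (hY : ∀ t ∈ Set.Icc a b, Y t = 1 - ∫ s in a..t, A s * Y s)
    (hYcont : ContinuousOn Y (Set.Icc a b))
    (M : Matrix (Fin m) (Fin m) ℂ)
    (hM : ∀ (j : Fin m) (u : C(Set.Icc a b, Fin m → ℂ)),
      (∀ t : Set.Icc a b, u t = fun i => Y (t : ℝ) i j) → (fun i => M i j) = B u) :
    (∀ (f : ℝ → Fin m → ℂ), IntegrableOn f (Set.Icc a b) → ∀ q : Fin m → ℂ,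
        ∃! u : C(Set.Icc a b, Fin m → ℂ),
          SolvesLinearSystem a b hab.le m A f u ∧ B u = q) ↔
      IsUnit M := by
  have key (f : ℝ → Fin m → ℂ) (hf : IntegrableOn f (Icc a b)) :
      (∀ q, ∃! u, SolvesLinearSystem a b hab.le m A f u ∧ B u = q) ↔ IsUnit M := by
    obtain ⟨u₀, hu₀, -⟩ := existsUnique_isVolterraSolution hab.le hA hf 0
    simp only [existsUnique_solvesLinearSystem_and_eq_iff hab.le hA hf hY hYcont hM hu₀]
    exact (M.isUnit_iff_forall_existsUnique_add_mulVec_eq (B u₀)).symm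
  exact ⟨fun h => (key 0 integrableOn_zero).1 (h 0 integrableOn_zero),
    fun hM f hf => (key f hf).2 hM⟩
end

section
/- Under the assumptions of the previous solvability criterion with [BY] invertible, the unique solution of x' + Ax = f a.e., Bx = q is x(t) = Y(t)[BY]⁻¹ q + Y(t) h(f) + R(t,f), where R(t,f) = Y(t)∫_a^t Y(τ)⁻¹ f(τ) dτ and h(f) = −[BY]⁻¹ B R(·,f). -/
/-!
Write `x = Y c + R + v` with `c = x a` and `R(t) = Y(t) ∫ₐᵗ Y⁻¹ f`. Then `v` solves the
homogeneous integral equation `v t = v a - ∫ₐᵗ A v` and vanishes at `a`. Such a solution vanishes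
identically: if `v x = 0` and `|∫ₓʸ ‖A‖| < 1`, the maximum `‖v z‖` of `‖v‖` between `x` and `y` is
at most `|∫ₓʸ ‖A‖| ‖v z‖`, so `v y = 0`; the zero set of `v` is therefore open and closed in
`[a, b]`. The same argument applied to `t ↦ Y t w` for `w ∈ ker Y t₀` shows that every `Y t` is
invertible, and Fubini on the triangle `a ≤ τ ≤ s ≤ t`, together with `∫_τ^t A Y = Y τ - Y t`,
shows that `R` solves the inhomogeneous equation. Finally `B (Y c) = [BY] c`, so
`q = B x = [BY] c + B R` determines `c`.
-/

open MeasureTheory Matrix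

attribute [local instance] Matrix.linftyOpNormedAddCommGroup Matrix.linftyOpNormedRing
  Matrix.linftyOpNormedSpace

open Set Filter Topology

section Bilinear

variable {𝕜 E F G : Type*} [NontriviallyNormedField 𝕜] [NormedAddCommGroup E] [NormedSpace 𝕜 E]
  [NormedAddCommGroup F] [NormedSpace 𝕜 F] [NormedAddCommGroup G] [NormedSpace 𝕜 G]
  (L : E →L[𝕜] F →L[𝕜] G) {μ : Measure ℝ} {K : Set ℝ} {f : ℝ → E} {g : ℝ → F}

theorem ContinuousLinearMap.integrableOn_comp₂_of_continuousOn_right (hf : IntegrableOn f K μ)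
    (hg : ContinuousOn g K) (hK : IsCompact K) : IntegrableOn (fun x => L (f x) (g x)) K μ := by
  obtain ⟨C, hC⟩ := hK.exists_bound_of_continuousOn hg
  exact L.integrable_of_bilin_of_bdd_right C hf (hg.aestronglyMeasurable hK.measurableSet)
    (ae_restrict_of_forall_mem hK.measurableSet hC)

theorem ContinuousLinearMap.integrableOn_comp₂_of_continuousOn_left (hf : ContinuousOn f K)
    (hg : IntegrableOn g K μ) (hK : IsCompact K) : IntegrableOn (fun x => L (f x) (g x)) K μ :=
  L.flip.integrableOn_comp₂_of_continuousOn_right hg hf hK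

end Bilinear

theorem MeasureTheory.IntegrableOn.intervalIntegrable_of_mem_Icc_s12 {E : Type*} [NormedAddCommGroup E]
    {g : ℝ → E} {α β c d : ℝ} (hg : IntegrableOn g (Icc α β)) (hc : c ∈ Icc α β)
    (hd : d ∈ Icc α β) : IntervalIntegrable g volume c d :=
  (hg.mono_set (uIcc_subset_Icc hc hd)).intervalIntegrable

theorem eq_sub_intervalIntegral_of_forall_eq_sub {E : Type*} [NormedAddCommGroup E]
    [NormedSpace ℝ E] {v g : ℝ → E} {α β x t : ℝ} (hg : IntegrableOn g (Icc α β))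
    (h : ∀ t ∈ Icc α β, v t = v α - ∫ s in α..t, g s) (hx : x ∈ Icc α β) (ht : t ∈ Icc α β) :
    v t = v x - ∫ s in x..t, g s := by
  have hα : α ∈ Icc α β := left_mem_Icc.mpr (hx.1.trans hx.2)
  rw [h t ht, h x hx, ← intervalIntegral.integral_interval_sub_left
    (hg.intervalIntegrable_of_mem_Icc_s12 hα ht) (hg.intervalIntegrable_of_mem_Icc_s12 hα hx)]
  abel

section Triangle

variable {𝕜 E F G : Type*} [RCLike 𝕜]
  [NormedAddCommGroup E] [NormedSpace 𝕜 E] [NormedSpace ℝ E] [CompleteSpace E]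
  [NormedAddCommGroup F] [NormedSpace 𝕜 F] [NormedSpace ℝ F] [CompleteSpace F]
  [NormedAddCommGroup G] [NormedSpace 𝕜 G] [NormedSpace ℝ G] [CompleteSpace G]
  (L : E →L[𝕜] F →L[𝕜] G)

theorem ContinuousLinearMap.intervalIntegral_comp₂_integral_swap {P : ℝ → E} {k : ℝ → F}
    {a t : ℝ} (hat : a ≤ t) (hP : IntegrableOn P (Ioc a t)) (hk : IntegrableOn k (Ioc a t)) :
    ∫ s in a..t, L (P s) (∫ τ in a..s, k τ) = ∫ τ in a..t, L (∫ s in τ..t, P s) (k τ) := by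
  -- both sides are iterated integrals of `H` over the triangle `a < τ ≤ s ≤ t`
  set H : ℝ × ℝ → G := {p | p.2 ≤ p.1}.indicator fun p => L (P p.1) (k p.2) with hH
  have hHint : Integrable H ((volume.restrict (Ioc a t)).prod (volume.restrict (Ioc a t))) := by
    refine Integrable.mono' ((hP.norm.mul_prod hk.norm).const_mul ‖L‖)
      ((L.aestronglyMeasurable_comp₂ hP.aestronglyMeasurable.comp_fst
        hk.aestronglyMeasurable.comp_snd).indicator
        (measurableSet_le measurable_snd measurable_fst))
      (.of_forall fun p => ?_)
    rw [hH, norm_indicator_eq_indicator_norm, ← mul_assoc]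
    exact (indicator_le_self' fun _ _ => norm_nonneg _) p |>.trans (L.le_opNorm₂ _ _)
  have hleft : ∀ s ∈ Ioc a t, L (P s) (∫ τ in a..s, k τ) = ∫ τ in Ioc a t, H (s, τ) := by
    intro s hs
    have hsec : ∀ τ, H (s, τ) = (Iic s).indicator (fun τ => L (P s) (k τ)) τ := fun τ => by
      simp only [hH, indicator_apply, mem_ofPred_eq, mem_Iic]
    simp_rw [hsec]
    rw [setIntegral_indicator measurableSet_Iic, Ioc_inter_Iic, min_eq_right hs.2,
      intervalIntegral.integral_of_le hs.1.le]
    exact ((L (P s)).integral_comp_comm (hk.mono_set (Ioc_subset_Ioc_right hs.2))).symm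
  have hright : ∀ τ ∈ Ioc a t, L (∫ s in τ..t, P s) (k τ) = ∫ s in Ioc a t, H (s, τ) := by
    intro τ hτ
    have hsec : ∀ s, H (s, τ) = (Ici τ).indicator (fun s => L (P s) (k τ)) s := fun s => by
      simp only [hH, indicator_apply, mem_ofPred_eq, mem_Ici]
    simp_rw [hsec]
    have hsupp : Ioc a t ∩ Ici τ = Icc τ t := by
      ext s
      simp only [mem_inter_iff, mem_Ioc, mem_Ici, mem_Icc]
      grind
    rw [setIntegral_indicator measurableSet_Ici, hsupp, integral_Icc_eq_integral_Ioc,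
      intervalIntegral.integral_of_le hτ.2]
    exact ((L.flip (k τ)).integral_comp_comm (hP.mono_set (Ioc_subset_Ioc_left hτ.1.le))).symm
  rw [intervalIntegral.integral_of_le hat, intervalIntegral.integral_of_le hat,
    setIntegral_congr_fun measurableSet_Ioc hleft, setIntegral_congr_fun measurableSet_Ioc hright]
  exact integral_integral_swap hHint

end Triangle

theorem ContinuousOn.matrix_mulVec {X R l n : Type*} [TopologicalSpace X] [TopologicalSpace R]
    [NonUnitalNonAssocSemiring R] [ContinuousAdd R] [ContinuousMul R] [Fintype n] {s : Set X}
    {A : X → Matrix l n R} {v : X → n → R} (hA : ContinuousOn A s) (hv : ContinuousOn v s) :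
    ContinuousOn (fun x => A x *ᵥ v x) s :=
  (continuous_fst.matrix_mulVec continuous_snd).comp_continuousOn (hA.prodMk hv)

theorem ContinuousOn.matrix_inv {X 𝕜 n : Type*} [TopologicalSpace X] [NontriviallyNormedField 𝕜]
    [CompleteSpace 𝕜] [Fintype n] [DecidableEq n] {s : Set X} {A : X → Matrix n n 𝕜}
    (hA : ContinuousOn A s) (h : ∀ x ∈ s, IsUnit (A x)) : ContinuousOn (fun x => (A x)⁻¹) s :=
  fun x hx => (continuousAt_matrix_inv _ (NormedRing.inverse_continuousAt
    ((isUnit_iff_isUnit_det _).mp (h x hx)).unit)).comp_continuousWithinAt (hA x hx)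

section LinftyOp

variable {n : Type*} [Fintype n] {𝕜 : Type*} [RCLike 𝕜]

/- The `L^∞` operator norm induces the product topology on matrices only up to unfolding instances;
preferring its topology makes `IntegrableOn` and `ContinuousOn` of matrix-valued maps refer to the
same topology. -/
@[reducible] noncomputable def Matrix.linftyOpTopology : TopologicalSpace (Matrix n n 𝕜) :=
  @UniformSpace.toTopologicalSpace _ (@PseudoMetricSpace.toUniformSpace _
    (@SeminormedAddGroup.toPseudoMetricSpace _ inferInstance))

attribute [local instance 2000] Matrix.linftyOpTopology

namespace Matrix

variable (n 𝕜) in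
noncomputable def mulVecL : Matrix n n 𝕜 →L[𝕜] (n → 𝕜) →L[𝕜] n → 𝕜 :=
  LinearMap.mkContinuous₂ (mulVecBilin 𝕜 𝕜) 1 fun M v => by
    rw [one_mul]; exact linfty_opNorm_mulVec M v

@[simp] theorem mulVecL_apply (M : Matrix n n 𝕜) (v : n → 𝕜) :
    mulVecL n 𝕜 M v = M *ᵥ v := rfl

end Matrix

namespace MeasureTheory.IntegrableOn

variable {μ : Measure ℝ} {K : Set ℝ} {A : ℝ → Matrix n n 𝕜} {v : ℝ → n → 𝕜}

theorem mulVec_continuousOn (hA : IntegrableOn A K μ) (hv : ContinuousOn v K) (hK : IsCompact K) :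
    IntegrableOn (fun s => A s *ᵥ v s) K μ := by
  simpa using (Matrix.mulVecL n 𝕜).integrableOn_comp₂_of_continuousOn_right hA hv hK

theorem continuousOn_mulVec (hA : ContinuousOn A K) (hv : IntegrableOn v K μ) (hK : IsCompact K) :
    IntegrableOn (fun s => A s *ᵥ v s) K μ := by
  simpa using (Matrix.mulVecL n 𝕜).integrableOn_comp₂_of_continuousOn_left hA hv hK

end MeasureTheory.IntegrableOn

namespace Matrix

theorem intervalIntegral_mulVec {P : ℝ → Matrix n n 𝕜} {a b : ℝ}
    (hP : IntervalIntegrable P volume a b) (w : n → 𝕜) :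
    (∫ s in a..b, P s) *ᵥ w = ∫ s in a..b, P s *ᵥ w := by
  simpa using (((mulVecL n 𝕜).flip w).intervalIntegral_comp_comm hP).symm

theorem mulVec_intervalIntegral {k : ℝ → n → 𝕜} {a b : ℝ} (M : Matrix n n 𝕜)
    (hk : IntervalIntegrable k volume a b) :
    M *ᵥ ∫ s in a..b, k s = ∫ s in a..b, M *ᵥ k s := by
  simpa using ((mulVecL n 𝕜 M).intervalIntegral_comp_comm hk).symm

theorem eq_zero_of_abs_integral_norm_lt_one {A : ℝ → Matrix n n 𝕜} {v : ℝ → n → 𝕜} {x y : ℝ}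
    (hA : IntervalIntegrable (fun s => ‖A s‖) volume x y) (hv : ContinuousOn v (uIcc x y))
    (h : ∀ t ∈ uIcc x y, v t = -∫ s in x..t, A s *ᵥ v s)
    (hsmall : |∫ s in x..y, ‖A s‖| < 1) : v y = 0 := by
  obtain ⟨z, hz, hmax⟩ := isCompact_uIcc.exists_isMaxOn nonempty_uIcc
    (continuous_norm.comp_continuousOn hv)
  have hxz : uIcc x z ⊆ uIcc x y := uIcc_subset_uIcc left_mem_uIcc hz
  have hbound : ‖v z‖ ≤ |∫ s in x..y, ‖A s‖| * ‖v z‖ := calc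
    ‖v z‖ = ‖∫ s in x..z, A s *ᵥ v s‖ := by rw [h z hz, norm_neg]
    _ ≤ |∫ s in x..z, ‖A s‖ * ‖v z‖| := by
      refine intervalIntegral.norm_integral_le_abs_of_norm_le
        (ae_restrict_of_forall_mem measurableSet_uIoc fun s hs => ?_)
        ((hA.mono_set hxz).mul_const _)
      exact (linfty_opNorm_mulVec _ _).trans (mul_le_mul_of_nonneg_left
        (hmax (hxz (uIoc_subset_uIcc hs))) (norm_nonneg _))
    _ = |∫ s in x..z, ‖A s‖| * ‖v z‖ := by
      rw [intervalIntegral.integral_mul_const, abs_mul, abs_norm]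
    _ ≤ |∫ s in x..y, ‖A s‖| * ‖v z‖ :=
      mul_le_mul_of_nonneg_right (intervalIntegral.abs_integral_mono_interval
        (uIoc_subset_uIoc_of_uIcc_subset_uIcc hxz) (.of_forall fun _ => norm_nonneg _) hA)
        (norm_nonneg _)
  have hz0 : ‖v z‖ = 0 := by nlinarith [norm_nonneg (v z)]
  exact norm_le_zero_iff.mp ((hmax right_mem_uIcc).trans hz0.le)

theorem eq_zero_of_forall_eq_sub_integral {A : ℝ → Matrix n n 𝕜} {v : ℝ → n → 𝕜}
    {α β x₀ : ℝ} (hA : IntegrableOn A (Icc α β)) (hv : ContinuousOn v (Icc α β))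
    (h : ∀ t ∈ Icc α β, v t = v α - ∫ s in α..t, A s *ᵥ v s) (hx₀ : x₀ ∈ Icc α β)
    (hv₀ : v x₀ = 0) : ∀ t ∈ Icc α β, v t = 0 := by
  have hAn : IntegrableOn (fun s => ‖A s‖) (Icc α β) := hA.norm
  have hAv : IntegrableOn (fun s => A s *ᵥ v s) (Icc α β) :=
    hA.mulVec_continuousOn hv isCompact_Icc
  have hstep : ∀ x ∈ Icc α β, ∀ y ∈ Icc α β, |∫ s in x..y, ‖A s‖| < 1 → v x = 0 → v y = 0 := by
    intro x hx y hy hsmall hvx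
    refine eq_zero_of_abs_integral_norm_lt_one (hAn.intervalIntegrable_of_mem_Icc_s12 hx hy)
      (hv.mono (uIcc_subset_Icc hx hy)) (fun t ht => ?_) hsmall
    rw [eq_sub_intervalIntegral_of_forall_eq_sub hAv h hx (uIcc_subset_Icc hx hy ht), hvx,
      zero_sub]
  have hnear : ∀ x ∈ Icc α β, ∀ᶠ y in 𝓝[Icc α β] x, |∫ s in x..y, ‖A s‖| < 1 := by
    intro x hx
    have hαβ : α ≤ β := hx.1.trans hx.2
    have hprim := intervalIntegral.continuousOn_primitive_interval'
      (hAn.intervalIntegrable_of_mem_Icc_s12 (left_mem_Icc.mpr hαβ) (right_mem_Icc.mpr hαβ))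
      (uIcc_of_le hαβ ▸ hx)
    rw [uIcc_of_le hαβ] at hprim
    exact (hprim x hx).abs.eventually_lt continuousWithinAt_const (by simp)
  intro t ht
  refine (isPreconnected_Icc.induction₂ (fun x y => v x = 0 ↔ v y = 0) (fun x hx => ?_)
    (fun _ _ _ _ _ _ => Iff.trans) (fun _ _ _ _ => Iff.symm) hx₀ ht).mp hv₀
  filter_upwards [hnear x hx, self_mem_nhdsWithin] with y hsmall hy
  refine ⟨hstep x hx y hy hsmall, hstep y hy x hx ?_⟩
  rwa [intervalIntegral.integral_symm, abs_neg]

section Matrizant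

variable [DecidableEq n] {a b t : ℝ} {A Y : ℝ → Matrix n n 𝕜} {f : ℝ → n → 𝕜}

def IsMatrizant (A Y : ℝ → Matrix n n 𝕜) (a b : ℝ) : Prop :=
  ∀ t ∈ Icc a b, Y t = 1 - ∫ s in a..t, A s * Y s

/-- The paper's `R(t, f)`. -/
noncomputable def variationOfConstants (Y : ℝ → Matrix n n 𝕜) (f : ℝ → n → 𝕜) (a t : ℝ) :
    n → 𝕜 :=
  Y t *ᵥ ∫ τ in a..t, (Y τ)⁻¹ *ᵥ f τ

namespace IsMatrizant

variable (hY : IsMatrizant A Y a b) (hA : IntegrableOn A (Icc a b))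
  (hYc : ContinuousOn Y (Icc a b))
include hY

theorem apply_left (hab : a ≤ b) : Y a = 1 := by
  rw [hY a (left_mem_Icc.mpr hab), intervalIntegral.integral_same, sub_zero]

include hA hYc

theorem mulVec_eq (ht : t ∈ Icc a b) (w : n → 𝕜) :
    Y t *ᵥ w = w - ∫ s in a..t, A s *ᵥ (Y s *ᵥ w) := by
  have hAY : IntervalIntegrable (fun s => A s * Y s) volume a t :=
    (hA.mul_continuousOn hYc isCompact_Icc).intervalIntegrable_of_mem_Icc_s12
      (left_mem_Icc.mpr (ht.1.trans ht.2)) ht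
  simp_rw [mulVec_mulVec]
  rw [hY t ht, sub_mulVec, one_mulVec, intervalIntegral_mulVec hAY]

theorem isUnit (ht : t ∈ Icc a b) : IsUnit (Y t) := by
  rw [isUnit_iff_isUnit_det, isUnit_iff_ne_zero]
  intro hdet
  obtain ⟨w, hw, hYw⟩ := exists_mulVec_eq_zero_iff.mpr hdet
  have hab : a ≤ b := ht.1.trans ht.2
  have hv := eq_zero_of_forall_eq_sub_integral hA (hYc.matrix_mulVec continuousOn_const)
    (fun s hs => by rw [hY.apply_left hab, one_mulVec]; exact hY.mulVec_eq hA hYc hs w) ht hYw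
    a (left_mem_Icc.mpr hab)
  rw [hY.apply_left hab, one_mulVec] at hv
  exact hw hv

theorem integral_eq_sub {τ : ℝ} (hτ : τ ∈ Icc a b) (ht : t ∈ Icc a b) :
    ∫ s in τ..t, A s * Y s = Y τ - Y t := by
  have hAY := hA.mul_continuousOn hYc isCompact_Icc
  have ha : a ∈ Icc a b := left_mem_Icc.mpr (hτ.1.trans hτ.2)
  rw [← intervalIntegral.integral_interval_sub_left (hAY.intervalIntegrable_of_mem_Icc_s12 ha ht)
    (hAY.intervalIntegrable_of_mem_Icc_s12 ha hτ), hY t ht, hY τ hτ]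
  abel

theorem integrableOn_inv_mulVec (hf : IntegrableOn f (Icc a b)) :
    IntegrableOn (fun τ => (Y τ)⁻¹ *ᵥ f τ) (Icc a b) :=
  IntegrableOn.continuousOn_mulVec (hYc.matrix_inv fun _ hs => hY.isUnit hA hYc hs) hf isCompact_Icc

theorem continuousOn_variationOfConstants (hf : IntegrableOn f (Icc a b)) :
    ContinuousOn (variationOfConstants Y f a) (Icc a b) := by
  refine hYc.matrix_mulVec ?_
  rcases le_or_gt a b with hab | hab
  · have hk := hY.integrableOn_inv_mulVec hA hYc hf
    rw [← uIcc_of_le hab] at hk ⊢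
    exact intervalIntegral.continuousOn_primitive_interval hk
  · simp [Icc_eq_empty_of_lt hab]

theorem variationOfConstants_eq (hf : IntegrableOn f (Icc a b)) (ht : t ∈ Icc a b) :
    variationOfConstants Y f a t =
      (∫ s in a..t, f s) - ∫ s in a..t, A s *ᵥ variationOfConstants Y f a s := by
  have hat : a ≤ t := ht.1
  have ha : a ∈ Icc a b := left_mem_Icc.mpr (ht.1.trans ht.2)
  have hsub : Ioc a t ⊆ Icc a b := Ioc_subset_Icc_self.trans (Icc_subset_Icc le_rfl ht.2)
  have hk := hY.integrableOn_inv_mulVec hA hYc hf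
  have hswap := (mulVecL n 𝕜).intervalIntegral_comp₂_integral_swap hat
    ((hA.mul_continuousOn hYc isCompact_Icc).mono_set hsub) (hk.mono_set hsub)
  simp only [mulVecL_apply] at hswap
  have htail : ∀ τ ∈ uIcc a t, (∫ s in τ..t, A s * Y s) *ᵥ ((Y τ)⁻¹ *ᵥ f τ) =
      f τ - Y t *ᵥ ((Y τ)⁻¹ *ᵥ f τ) := by
    intro τ hτ
    have hτ' : τ ∈ Icc a b := uIcc_subset_Icc ha ht hτ
    rw [hY.integral_eq_sub hA hYc hτ' ht, sub_mulVec, mulVec_mulVec,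
      mul_nonsing_inv _ ((isUnit_iff_isUnit_det _).mp (hY.isUnit hA hYc hτ')), one_mulVec]
  unfold variationOfConstants
  simp_rw [mulVec_mulVec]
  have hYtk : IntegrableOn (fun τ => Y t *ᵥ ((Y τ)⁻¹ *ᵥ f τ)) (Icc a b) :=
    IntegrableOn.continuousOn_mulVec continuousOn_const hk isCompact_Icc
  rw [hswap, intervalIntegral.integral_congr htail,
    intervalIntegral.integral_sub (hf.intervalIntegrable_of_mem_Icc_s12 ha ht)
      (hYtk.intervalIntegrable_of_mem_Icc_s12 ha ht),
    ← mulVec_intervalIntegral _ (hk.intervalIntegrable_of_mem_Icc_s12 ha ht), sub_sub_cancel]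

theorem eq_mulVec_add_variationOfConstants (hf : IntegrableOn f (Icc a b)) {x : ℝ → n → 𝕜}
    (hx : ContinuousOn x (Icc a b))
    (hxeq : ∀ t ∈ Icc a b, x t = x a + ∫ s in a..t, (f s - A s *ᵥ x s)) (ht : t ∈ Icc a b) :
    x t = Y t *ᵥ x a + variationOfConstants Y f a t := by
  have hab : a ≤ b := ht.1.trans ht.2
  have ha : a ∈ Icc a b := left_mem_Icc.mpr hab
  have hYx : ContinuousOn (fun s => Y s *ᵥ x a) (Icc a b) := hYc.matrix_mulVec continuousOn_const
  have hR := hY.continuousOn_variationOfConstants hA hYc hf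
  have hAu : ∀ {u : ℝ → n → 𝕜}, ContinuousOn u (Icc a b) → ∀ s ∈ Icc a b,
      IntervalIntegrable (fun r => A r *ᵥ u r) volume a s := fun hu s hs =>
    (hA.mulVec_continuousOn hu isCompact_Icc).intervalIntegrable_of_mem_Icc_s12 ha hs
  obtain ⟨v, hv⟩ : ∃ v : ℝ → n → 𝕜, v = fun s => x s - Y s *ᵥ x a - variationOfConstants Y f a s :=
    ⟨_, rfl⟩
  have hva : v a = 0 := by
    simp [hv, variationOfConstants, hY.apply_left hab]
  have hveq : ∀ s ∈ Icc a b, v s = v a - ∫ r in a..s, A r *ᵥ v r := by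
    intro s hs
    rw [hva, zero_sub]
    simp only [hv, mulVec_sub]
    rw [intervalIntegral.integral_sub ((hAu hx s hs).sub (hAu hYx s hs)) (hAu hR s hs),
      intervalIntegral.integral_sub (hAu hx s hs) (hAu hYx s hs), hxeq s hs,
      intervalIntegral.integral_sub (hf.intervalIntegrable_of_mem_Icc_s12 ha hs) (hAu hx s hs),
      hY.mulVec_eq hA hYc hs, hY.variationOfConstants_eq hA hYc hf hs]
    abel
  have hvt : v t = 0 :=
    eq_zero_of_forall_eq_sub_integral hA (hv ▸ (hx.sub hYx).sub hR) hveq ha hva t ht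
  simp only [hv] at hvt
  rwa [sub_sub, sub_eq_zero] at hvt

end IsMatrizant

end Matrizant

end Matrix

end LinftyOp

theorem ContinuousLinearMap.map_eq_mulVec {T R n : Type*} [TopologicalSpace T] [CommRing R]
    [TopologicalSpace R] [IsTopologicalRing R] [Fintype n] (B : C(T, n → R) →L[R] (n → R))
    {Y : T → Matrix n n R} (hY : Continuous Y) {M : Matrix n n R}
    (hM : ∀ (j : n) (u : C(T, n → R)), (∀ t, u t = fun i => Y t i j) → (fun i => M i j) = B u)
    {c : n → R} {u : C(T, n → R)} (hu : ∀ t, u t = Y t *ᵥ c) : B u = M *ᵥ c := by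
  let col : n → C(T, n → R) := fun j =>
    ⟨fun t i => Y t i j, continuous_pi fun i => hY.matrix_elem i j⟩
  have hu' : u = ∑ j, c j • col j := by
    ext t i
    simp [col, hu, mulVec, dotProduct, mul_comm]
  rw [hu', map_sum]
  simp_rw [map_smul, ← hM _ (col _) (fun t => rfl)]
  ext i
  simp [mulVec, dotProduct, mul_comm]

theorem SolvesLinearSystem.iccExtend_eq {a b : ℝ} {hab : a ≤ b} {m : ℕ}
    {A : ℝ → Matrix (Fin m) (Fin m) ℂ} {f : ℝ → Fin m → ℂ} {u : C(Set.Icc a b, Fin m → ℂ)}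
    (hu : SolvesLinearSystem a b hab m A f u) :
    ∀ t ∈ Icc a b, IccExtend hab u t =
      IccExtend hab u a + ∫ s in a..t, (f s - A s *ᵥ IccExtend hab u s) := by
  intro t ht
  rw [IccExtend_of_mem _ _ ht, IccExtend_left]
  exact hu ⟨t, ht⟩

/-- Solution representation: if `[BY]` is invertible, the unique solution of
`x' + Ax = f` a.e., `Bx = q` is
`x(t) = Y(t)[BY]⁻¹ q + Y(t) h(f) + R(t,f)` with `R(t,f) = Y(t)∫_a^t Y⁻¹ f` and
`h(f) = −[BY]⁻¹ B R(·,f)`. -/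
theorem solution_representation
    (a b : ℝ) (hab : a < b) (m : ℕ)
    (A : ℝ → Matrix (Fin m) (Fin m) ℂ) (hA : @IntegrableOn _ _ _ _ SeminormedAddGroup.toContinuousENorm A (Set.Icc a b) volume)
    (f : ℝ → Fin m → ℂ) (hf : IntegrableOn f (Set.Icc a b)) (q : Fin m → ℂ)
    (B : C(Set.Icc a b, Fin m → ℂ) →L[ℂ] (Fin m → ℂ))
    (Y : ℝ → Matrix (Fin m) (Fin m) ℂ)
    (hY : ∀ t ∈ Set.Icc a b, Y t = 1 - ∫ s in a..t, A s * Y s)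
    (hYcont : ContinuousOn Y (Set.Icc a b))
    (M : Matrix (Fin m) (Fin m) ℂ)
    (hM : ∀ (j : Fin m) (u : C(Set.Icc a b, Fin m → ℂ)),
      (∀ t : Set.Icc a b, u t = fun i => Y (t : ℝ) i j) → (fun i => M i j) = B u)
    (hMinv : IsUnit M)
    (uR : C(Set.Icc a b, Fin m → ℂ))
    (huR : ∀ t : Set.Icc a b, uR t = Y (t : ℝ) *ᵥ (∫ τ in a..(t : ℝ), (Y τ)⁻¹ *ᵥ f τ))
    (x : C(Set.Icc a b, Fin m → ℂ))
    (hx : SolvesLinearSystem a b hab.le m A f x) (hxq : B x = q) :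
    ∀ t : Set.Icc a b,
      x t = Y (t : ℝ) *ᵥ (M⁻¹ *ᵥ q) + Y (t : ℝ) *ᵥ (-(M⁻¹ *ᵥ B uR)) + uR t := by
  set c := x ⟨a, left_mem_Icc.mpr hab.le⟩
  have hrep : ∀ t : Icc a b, x t = Y t *ᵥ c + uR t := by
    intro t
    have h := IsMatrizant.eq_mulVec_add_variationOfConstants hY hA hYcont hf
      x.continuous.Icc_extend'.continuousOn hx.iccExtend_eq t.2
    rw [IccExtend_of_mem _ _ t.2, IccExtend_left] at h
    rw [huR t]
    exact h
  have hBY : B (x - uR) = M *ᵥ c := B.map_eq_mulVec hYcont.domRestrict hM fun t => by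
    rw [ContinuousMap.sub_apply, hrep t, add_sub_cancel_right]
    rfl
  have hc : c = M⁻¹ *ᵥ q + -(M⁻¹ *ᵥ B uR) := by
    rw [map_sub, hxq, sub_eq_iff_eq_add] at hBY
    rw [← sub_eq_add_neg, ← mulVec_sub, hBY, add_sub_cancel_right, mulVec_mulVec,
      nonsing_inv_mul _ ((isUnit_iff_isUnit_det _).mp hMinv), one_mulVec]
  intro t
  rw [hrep t, hc, mulVec_add]
end

section
/- Let B : C^{(r−1)}([a,b], ℂ^m) → ℂ^{rm} be continuous linear with representation By = Σ_{l=0}^{r−2} α_l y^{(l)}(a) + ∫_a^b (dΦ) y^{(r−1)}, and define T : C([a,b], ℂ^{rm}) → ℂ^{rm} by Tv = Σ_{l=0}^{r−2} α_l v^l(a) + ∫_a^b (dΦ) v^{r−1} for v = col(v⁰,…,v^{r−1}). Then ‖B‖ ≤ ‖T‖ ≤ θ ‖B‖ for some constant θ > 0 depending only on r, m and b − a. -/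
/-- `I` is the Riemann–Stieltjes integral `∫_a^b x dφ` (mesh limit of tagged
Riemann–Stieltjes sums). -/
def IsRSIntegral (a b : ℝ) (φ x : ℝ → ℂ) (I : ℂ) : Prop :=
  ∀ ε > (0 : ℝ), ∃ δ > (0 : ℝ), ∀ (k : ℕ) (t : Fin (k + 1) → ℝ) (ξ : Fin k → ℝ),
    t 0 = a → t (Fin.last k) = b → Monotone t →
    (∀ i : Fin k, t i.castSucc ≤ ξ i ∧ ξ i ≤ t i.succ ∧ t i.succ - t i.castSucc < δ) →
    ‖(∑ i : Fin k, x (ξ i) * (φ (t i.succ) - φ (t i.castSucc))) - I‖ < ε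

/-- `φ` belongs to `NBV([a,b])`. -/
def NBVOn (a b : ℝ) (φ : ℝ → ℂ) : Prop :=
  BoundedVariationOn φ (Set.Icc a b) ∧
    (∀ t ∈ Set.Ioo a b, ContinuousWithinAt φ (Set.Iio t) t) ∧
    φ a = 0 ∧ (∀ t ≤ a, φ t = 0) ∧ (∀ t, b ≤ t → φ t = φ b)

/-! `‖B‖ ≤ ‖T‖` because the sup norm of `col(y, y', …, y^{(r−1)})` is at most `‖y‖_{C^{(r−1)}}`.
Conversely, by uniqueness of the Riemann–Stieltjes integral `T v` only depends on
`v⁰(a), …, v^{r−2}(a)` and `v^{r−1}`. The `(r−1)`-fold primitive `y` of `v^{r−1}` with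
`y^{(l)}(a) = v^l(a)` has the same data, so `T v = B y`, and every derivative of `y` is bounded by
`(1 + (b − a))^{r−1} ‖v‖`; hence `θ = r (1 + (b − a))^{r−1}`. -/

open Set

lemma exists_tagged_partition_mesh_lt {a b δ : ℝ} (hab : a ≤ b) (hδ : 0 < δ) :
    ∃ (k : ℕ) (t : Fin (k + 1) → ℝ) (ξ : Fin k → ℝ),
      t 0 = a ∧ t (Fin.last k) = b ∧ Monotone t ∧
      ∀ i : Fin k, t i.castSucc ≤ ξ i ∧ ξ i ≤ t i.succ ∧ t i.succ - t i.castSucc < δ := by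
  obtain ⟨k, hk⟩ := exists_nat_gt ((b - a) / δ)
  have hk₀ : (0 : ℝ) < k + 1 := by positivity
  set d := (b - a) / (k + 1)
  have hd : 0 ≤ d := div_nonneg (sub_nonneg.2 hab) hk₀.le
  have hdδ : d < δ := by
    rw [div_lt_iff₀ hk₀]
    rw [div_lt_iff₀ hδ] at hk
    nlinarith
  refine ⟨k + 1, fun i => a + i * d, fun i => a + i * d, by simp, ?_, ?_, fun i => ?_⟩
  · simp only [Fin.val_last, Nat.cast_add, Nat.cast_one, d]
    field_simp
    ring
  · exact fun i j hij => by simp only; gcongr; exact_mod_cast hij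
  · simp only [Fin.val_succ, Fin.val_castSucc, Nat.cast_add, Nat.cast_one]
    refine ⟨le_rfl, by linarith, by linarith⟩

theorem IsRSIntegral.unique {a b : ℝ} (hab : a ≤ b) {φ x : ℝ → ℂ} {I J : ℂ}
    (hI : IsRSIntegral a b φ x I) (hJ : IsRSIntegral a b φ x J) : I = J := by
  refine eq_of_forall_dist_le fun ε hε => ?_
  obtain ⟨δ₁, hδ₁, hI⟩ := hI (ε / 2) (by positivity)
  obtain ⟨δ₂, hδ₂, hJ⟩ := hJ (ε / 2) (by positivity)
  obtain ⟨k, t, ξ, h₀, hk, hmono, hfine⟩ := exists_tagged_partition_mesh_lt hab (lt_min hδ₁ hδ₂)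
  have hI := hI k t ξ h₀ hk hmono fun i =>
    ⟨(hfine i).1, (hfine i).2.1, (hfine i).2.2.trans_le (min_le_left _ _)⟩
  have hJ := hJ k t ξ h₀ hk hmono fun i =>
    ⟨(hfine i).1, (hfine i).2.1, (hfine i).2.2.trans_le (min_le_right _ _)⟩
  rw [← dist_eq_norm] at hI hJ
  linarith [dist_triangle_left I J (∑ i : Fin k, x (ξ i) * (φ (t i.succ) - φ (t i.castSucc)))]

lemma ContinuousMap.norm_le_sum_iSup_norm_apply {X ι E : Type*} [TopologicalSpace X]
    [CompactSpace X] [Fintype ι] [NormedAddCommGroup E] (v : C(X, ι → E)) :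
    ‖v‖ ≤ ∑ i, ⨆ x, ‖v x i‖ := by
  have hsup_nonneg : ∀ i, 0 ≤ ⨆ x, ‖v x i‖ := fun i => Real.iSup_nonneg fun x => norm_nonneg _
  refine (v.norm_le (Finset.sum_nonneg fun i _ => hsup_nonneg i)).2 fun x =>
    (pi_norm_le_iff_of_nonneg (Finset.sum_nonneg fun i _ => hsup_nonneg i)).2 fun i => ?_
  have hbdd : BddAbove (range fun x => ‖v x i‖) :=
    (isCompact_range ((continuous_apply i).comp v.continuous).norm).bddAbove
  exact (le_ciSup hbdd x).trans
    (Finset.single_le_sum (fun i _ => hsup_nonneg i) (Finset.mem_univ i))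

lemma sum_iSup_le_card_mul {X ι : Type*} [Nonempty X] [Fintype ι] {f : ι → X → ℝ} {C : ℝ}
    (h : ∀ i x, f i x ≤ C) : ∑ i, ⨆ x, f i x ≤ Fintype.card ι * C := by
  simpa using Finset.sum_le_card_nsmul Finset.univ _ C fun i _ => ciSup_le (h i)

section IteratedPrimitive

variable {E : Type*} [NormedAddCommGroup E] [NormedSpace ℝ E]

noncomputable def iteratedPrimitive (a : ℝ) (c : ℕ → E) (g : ℝ → E) : ℕ → ℝ → E
  | 0 => g
  | k + 1 => fun t => c k + ∫ s in a..t, iteratedPrimitive a c g k s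

variable {a : ℝ} {c : ℕ → E} {g : ℝ → E}

lemma iteratedPrimitive_succ_self (k : ℕ) : iteratedPrimitive a c g (k + 1) a = c k := by
  simp [iteratedPrimitive]

lemma continuous_iteratedPrimitive (hg : Continuous g) (k : ℕ) :
    Continuous (iteratedPrimitive a c g k) := by
  induction k with
  | zero => exact hg
  | succ k ih =>
    exact continuous_const.add
      (intervalIntegral.continuous_primitive (fun _ _ => ih.intervalIntegrable _ _) a)

lemma norm_iteratedPrimitive_le {b C : ℝ} (hab : a ≤ b) (hC : 0 ≤ C) (hc : ∀ k, ‖c k‖ ≤ C)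
    (hg : ∀ t ∈ Icc a b, ‖g t‖ ≤ C) (k : ℕ) {t : ℝ} (ht : t ∈ Icc a b) :
    ‖iteratedPrimitive a c g k t‖ ≤ (1 + (b - a)) ^ k * C := by
  induction k generalizing t with
  | zero => simpa [iteratedPrimitive] using hg t ht
  | succ k ih =>
    have hint : ‖∫ s in a..t, iteratedPrimitive a c g k s‖ ≤ (1 + (b - a)) ^ k * C * |t - a| :=
      intervalIntegral.norm_integral_le_of_norm_le_const fun s hs => by
        rw [uIoc_of_le ht.1] at hs
        exact ih ⟨hs.1.le, hs.2.trans ht.2⟩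
    have hta : |t - a| ≤ b - a := by rw [abs_of_nonneg (by linarith [ht.1])]; linarith [ht.2]
    have hpow : 1 ≤ (1 + (b - a)) ^ k := one_le_pow₀ (by linarith)
    calc ‖c k + ∫ s in a..t, iteratedPrimitive a c g k s‖
        ≤ C + (1 + (b - a)) ^ k * C * (b - a) := by
          refine (norm_add_le _ _).trans (add_le_add (hc k) (hint.trans ?_))
          gcongr
      _ ≤ (1 + (b - a)) ^ (k + 1) * C := by rw [pow_succ]; nlinarith

variable [CompleteSpace E]

lemma hasDerivAt_iteratedPrimitive_succ (hg : Continuous g) (k : ℕ) (t : ℝ) :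
    HasDerivAt (iteratedPrimitive a c g (k + 1)) (iteratedPrimitive a c g k t) t :=
  ((continuous_iteratedPrimitive hg k).integral_hasStrictDerivAt a t).hasDerivAt.const_add _

lemma contDiff_iteratedPrimitive (hg : Continuous g) (k : ℕ) :
    ContDiff ℝ k (iteratedPrimitive a c g k) := by
  induction k with
  | zero => exact contDiff_zero.2 hg
  | succ k ih =>
    rw [Nat.cast_succ, contDiff_succ_iff_deriv]
    have hderiv : deriv (iteratedPrimitive a c g (k + 1)) = iteratedPrimitive a c g k :=
      funext fun t => (hasDerivAt_iteratedPrimitive_succ hg k t).deriv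
    exact ⟨fun t => (hasDerivAt_iteratedPrimitive_succ hg k t).differentiableAt, by simp,
      hderiv ▸ ih⟩

lemma iteratedDerivWithin_iteratedPrimitive {s : Set ℝ} (hs : UniqueDiffOn ℝ s)
    (hg : Continuous g) (j k : ℕ) {t : ℝ} (ht : t ∈ s) :
    iteratedDerivWithin j (iteratedPrimitive a c g (j + k)) s t = iteratedPrimitive a c g k t := by
  induction j generalizing k t with
  | zero => simp
  | succ j ih =>
    have hderiv : EqOn (derivWithin (iteratedPrimitive a c g (j + 1 + k)) s)
        (iteratedPrimitive a c g (j + k)) s := fun u hu => by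
      rw [show j + 1 + k = j + k + 1 by omega]
      exact (hasDerivAt_iteratedPrimitive_succ hg _ u).hasDerivWithinAt.derivWithin (hs u hu)
    rw [iteratedDerivWithin_succ', iteratedDerivWithin_congr hderiv ht, ih k ht]

end IteratedPrimitive

theorem exists_jet_lift {E : Type*} [NormedAddCommGroup E] [NormedSpace ℝ E] [CompleteSpace E]
    {a b : ℝ} (hab : a < b) {n : ℕ} (v : C(Icc a b, Fin (n + 2) → E)) :
    ∃ y : ℝ → E, ContDiffOn ℝ (n + 1) y (Icc a b) ∧
      ∃ w : C(Icc a b, Fin (n + 2) → E),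
        (∀ t j, w t j = iteratedDerivWithin j y (Icc a b) t) ∧
        (∀ l : Fin (n + 1), w ⟨a, left_mem_Icc.2 hab.le⟩ l.castSucc =
          v ⟨a, left_mem_Icc.2 hab.le⟩ l.castSucc) ∧
        (∀ t, w t (Fin.last (n + 1)) = v t (Fin.last (n + 1))) ∧
        ∀ t j, ‖w t j‖ ≤ (1 + (b - a)) ^ (n + 1) * ‖v‖ := by
  set a' : Icc a b := ⟨a, left_mem_Icc.2 hab.le⟩
  set g : ℝ → E := fun t => IccExtend hab.le v t (Fin.last (n + 1))
  have hg : Continuous g := (continuous_apply _).comp v.continuous.Icc_extend'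
  -- `y^{(j)} = F (n + 1 - j)`, so `F (k + 1)` starts from `v^{n-k}(a)`
  set F := iteratedPrimitive a (fun k => v a' ⟨n - k, by omega⟩) g
  have hderiv (j : Fin (n + 2)) {t : ℝ} (ht : t ∈ Icc a b) :
      iteratedDerivWithin j (F (n + 1)) (Icc a b) t = F (n + 1 - j) t := by
    have := iteratedDerivWithin_iteratedPrimitive (a := a) (c := fun k => v a' ⟨n - k, by omega⟩)
      (uniqueDiffOn_Icc hab) hg j (n + 1 - j) ht
    rwa [Nat.add_sub_cancel' (Nat.lt_succ_iff.1 j.isLt)] at this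
  refine ⟨F (n + 1), by exact_mod_cast (contDiff_iteratedPrimitive hg (n + 1)).contDiffOn,
    ⟨fun t j => F (n + 1 - j) t,
      continuous_pi fun j => (continuous_iteratedPrimitive hg _).comp continuous_subtype_val⟩,
    fun t j => (hderiv j t.2).symm, fun l => ?_, fun t => ?_, fun t j => ?_⟩
  · have hl : n + 1 - l.castSucc = n - l + 1 := by simp only [Fin.val_castSucc]; omega
    simp only [ContinuousMap.coe_mk, hl, F]
    rw [show (a' : ℝ) = a from rfl, iteratedPrimitive_succ_self]
    exact congrArg (v a') (Fin.ext (by simp only [Fin.val_castSucc]; omega))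
  · simp [F, iteratedPrimitive, g]
  · have hv : ∀ s j, ‖v s j‖ ≤ ‖v‖ := fun s j => (norm_le_pi_norm _ j).trans (v.norm_coe_le_norm s)
    refine (norm_iteratedPrimitive_le hab.le (norm_nonneg v) (fun k => hv _ _) (fun s _ => hv _ _)
      _ t.2).trans ?_
    gcongr
    · linarith
    · omega

lemma apply_eq_of_eq_left_of_eq_last {a b : ℝ} (hab : a < b) {n m : ℕ} {κ : Type*}
    {α : Fin (n + 1) → Matrix κ (Fin m) ℂ} {Φ : κ → Fin m → ℝ → ℂ}
    {T : C(Icc a b, Fin (n + 2) → Fin m → ℂ) → κ → ℂ}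
    (hT : ∀ v : C(Icc a b, Fin (n + 2) → Fin m → ℂ), ∃ I : κ → Fin m → ℂ,
      (∀ lam mu, IsRSIntegral a b (Φ lam mu)
        (fun t => IccExtend hab.le v t (Fin.last (n + 1)) mu) (I lam mu)) ∧
      ∀ lam, T v lam =
        (∑ l : Fin (n + 1), (α l).mulVec
          (fun mu => v ⟨a, left_mem_Icc.mpr hab.le⟩ l.castSucc mu) lam) + ∑ mu : Fin m, I lam mu)
    {v w : C(Icc a b, Fin (n + 2) → Fin m → ℂ)}
    (hleft : ∀ l : Fin (n + 1), v ⟨a, left_mem_Icc.2 hab.le⟩ l.castSucc =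
      w ⟨a, left_mem_Icc.2 hab.le⟩ l.castSucc)
    (hlast : ∀ t, v t (Fin.last (n + 1)) = w t (Fin.last (n + 1))) :
    T v = T w := by
  obtain ⟨I, hI, hTv⟩ := hT v
  obtain ⟨J, hJ, hTw⟩ := hT w
  have hlast' (mu : Fin m) : (fun t => IccExtend hab.le v t (Fin.last (n + 1)) mu) =
      fun t => IccExtend hab.le w t (Fin.last (n + 1)) mu := funext fun t => congrFun (hlast _) mu
  funext lam
  rw [hTv, hTw]
  simp only [hleft]
  congr 1
  exact Finset.sum_congr rfl fun mu _ => (hI lam mu).unique hab.le (hlast' mu ▸ hJ lam mu)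

/-- Here `r = n + 2`, `ℂ^{rm}` is indexed by `Fin (n+2) × Fin m`, `B` is described through its
action `B y = T v` on the columns `v = col(y, y', …, y^{(r−1)})`, and `‖B‖` through the best
constant `K` in `‖T v‖ ≤ K ‖y‖_{C^{(r−1)}}`. -/
theorem operator_norm_equivalence_B_T_general
    (a b : ℝ) (hab : a < b) (n m : ℕ) :
    ∃ θ : ℝ, 0 < θ ∧
      ∀ (α : Fin (n + 1) → Matrix (Fin (n + 2) × Fin m) (Fin m) ℂ)
        (Φ : (Fin (n + 2) × Fin m) → Fin m → ℝ → ℂ),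
        (∀ lam mu, NBVOn a b (Φ lam mu)) →
        ∀ T : C(Set.Icc a b, Fin (n + 2) → Fin m → ℂ) →L[ℂ]
            ((Fin (n + 2) × Fin m) → ℂ),
          (∀ v : C(Set.Icc a b, Fin (n + 2) → Fin m → ℂ),
            ∃ I : (Fin (n + 2) × Fin m) → Fin m → ℂ,
              (∀ lam mu, IsRSIntegral a b (Φ lam mu)
                (fun t => Set.IccExtend hab.le v t (Fin.last (n + 1)) mu) (I lam mu)) ∧
              ∀ lam, T v lam =
                (∑ l : Fin (n + 1), (α l).mulVec
                  (fun mu => v ⟨a, Set.left_mem_Icc.mpr hab.le⟩ l.castSucc mu) lam) +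
                ∑ mu : Fin m, I lam mu) →
          ((∀ (y : ℝ → Fin m → ℂ), ContDiffOn ℝ (n + 1) y (Set.Icc a b) →
              ∀ v : C(Set.Icc a b, Fin (n + 2) → Fin m → ℂ),
                (∀ (t : Set.Icc a b) (j : Fin (n + 2)),
                  v t j = iteratedDerivWithin j y (Set.Icc a b) t) →
                ‖T v‖ ≤ ‖T‖ * ∑ j : Fin (n + 2),
                  ⨆ t : Set.Icc a b, ‖iteratedDerivWithin j y (Set.Icc a b) t‖) ∧
            ∀ K : ℝ, 0 ≤ K →
              (∀ (y : ℝ → Fin m → ℂ), ContDiffOn ℝ (n + 1) y (Set.Icc a b) →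
                ∀ v : C(Set.Icc a b, Fin (n + 2) → Fin m → ℂ),
                  (∀ (t : Set.Icc a b) (j : Fin (n + 2)),
                    v t j = iteratedDerivWithin j y (Set.Icc a b) t) →
                  ‖T v‖ ≤ K * ∑ j : Fin (n + 2),
                    ⨆ t : Set.Icc a b, ‖iteratedDerivWithin j y (Set.Icc a b) t‖) →
              ‖T‖ ≤ θ * K) := by
  have hθ : 0 < (n + 2) * (1 + (b - a)) ^ (n + 1) := by
    have : 0 < 1 + (b - a) := by linarith
    positivity
  refine ⟨_, hθ, fun α Φ _ T hT => ⟨fun y _ v hv => ?_, fun K hK hB => ?_⟩⟩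
  · calc ‖T v‖ ≤ ‖T‖ * ‖v‖ := T.le_opNorm v
      _ ≤ _ := by
        gcongr
        simpa only [hv] using v.norm_le_sum_iSup_norm_apply
  · have : Nonempty (Icc a b) := ⟨⟨a, left_mem_Icc.2 hab.le⟩⟩
    refine T.opNorm_le_bound (by positivity) fun v => ?_
    obtain ⟨y, hy, w, hw, hleft, hlast, hbound⟩ := exists_jet_lift hab v
    calc ‖T v‖ = ‖T w‖ := by rw [apply_eq_of_eq_left_of_eq_last hab hT hleft hlast]
      _ ≤ K * ∑ j : Fin (n + 2), ⨆ t : Icc a b, ‖w t j‖ := by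
        simpa only [hw] using hB y hy w hw
      _ ≤ K * ((n + 2) * ((1 + (b - a)) ^ (n + 1) * ‖v‖)) := by
        gcongr
        simpa using sum_iSup_le_card_mul fun j t => hbound t j
      _ = _ := by ring

/-- Inequality (32): for `B : C^{(r−1)}([a,b],ℂ^m) → ℂ^{rm}` with representation
`By = Σ_{l=0}^{r−2} α_l y^{(l)}(a) + ∫_a^b (dΦ) y^{(r−1)}` and the associated operator
`T : C([a,b],ℂ^{rm}) → ℂ^{rm}`, `Tv = Σ_{l=0}^{r−2} α_l v^l(a) + ∫_a^b (dΦ) v^{r−1}`,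
one has `‖B‖ ≤ ‖T‖ ≤ θ ‖B‖` for a constant `θ > 0` depending only on `r`, `m` and
`b − a`. Here `r = n + 2 ≥ 2`, `ℂ^{rm}` is indexed by `Fin (n+2) × Fin m`, `B` is
described through its action `B y = T v` on the columns `v = col(y, y', …, y^{(r−1)})`,
and its norm through the best constant `K` in `‖T v‖ ≤ K ‖y‖_{C^{(r−1)}}`. -/
theorem operator_norm_equivalence_B_T
    (a b : ℝ) (hab : a < b) (n m : ℕ) (hm : 0 < m) :
    ∃ θ : ℝ, 0 < θ ∧
      ∀ (α : Fin (n + 1) → Matrix (Fin (n + 2) × Fin m) (Fin m) ℂ)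
        (Φ : (Fin (n + 2) × Fin m) → Fin m → ℝ → ℂ),
        (∀ lam mu, NBVOn a b (Φ lam mu)) →
        ∀ T : C(Set.Icc a b, Fin (n + 2) → Fin m → ℂ) →L[ℂ]
            ((Fin (n + 2) × Fin m) → ℂ),
          (∀ v : C(Set.Icc a b, Fin (n + 2) → Fin m → ℂ),
            ∃ I : (Fin (n + 2) × Fin m) → Fin m → ℂ,
              (∀ lam mu, IsRSIntegral a b (Φ lam mu)
                (fun t => Set.IccExtend hab.le v t (Fin.last (n + 1)) mu) (I lam mu)) ∧
              ∀ lam, T v lam =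
                (∑ l : Fin (n + 1), (α l).mulVec
                  (fun mu => v ⟨a, Set.left_mem_Icc.mpr hab.le⟩ l.castSucc mu) lam) +
                ∑ mu : Fin m, I lam mu) →
          ((∀ (y : ℝ → Fin m → ℂ), ContDiffOn ℝ (n + 1) y (Set.Icc a b) →
              ∀ v : C(Set.Icc a b, Fin (n + 2) → Fin m → ℂ),
                (∀ (t : Set.Icc a b) (j : Fin (n + 2)),
                  v t j = iteratedDerivWithin j y (Set.Icc a b) t) →
                ‖T v‖ ≤ ‖T‖ * ∑ j : Fin (n + 2),
                  ⨆ t : Set.Icc a b, ‖iteratedDerivWithin j y (Set.Icc a b) t‖) ∧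
            ∀ K : ℝ, 0 ≤ K →
              (∀ (y : ℝ → Fin m → ℂ), ContDiffOn ℝ (n + 1) y (Set.Icc a b) →
                ∀ v : C(Set.Icc a b, Fin (n + 2) → Fin m → ℂ),
                  (∀ (t : Set.Icc a b) (j : Fin (n + 2)),
                    v t j = iteratedDerivWithin j y (Set.Icc a b) t) →
                  ‖T v‖ ≤ K * ∑ j : Fin (n + 2),
                    ⨆ t : Set.Icc a b, ‖iteratedDerivWithin j y (Set.Icc a b) t‖) →
              ‖T‖ ≤ θ * K) :=
  operator_norm_equivalence_B_T_general a b hab n m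
end
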